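/- Let m ≥ 1 be an integer and set k = 2m−1. In the field ℚ(t) of rational functions over ℚ, with P_k(t) = 1 + (k+4)·Σ_{i=1}^{m−1} t^i + (k+6)·t^m + (k+4)·Σ_{i=m+1}^{k} t^i + t^{k+1}, the following identity holds: P_k(t)/((1−t)²(1−t^k)) − (k+4)·t/(1−t)³ = (1 − t^{k+1})²/((1−t)²(1−t^m)²(1−t^k)). (This is the identity H_{ℙ(1,1,k)} + (k+4)·Q = Hilbert series of a complete intersection of two hypersurfaces of degree k+1 in ℙ(1,1,m,m,k).) -/
import Mathlib

noncomputable def t : RatFunc ℚ := RatFunc.X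

lemma one_sub_t_pow_ne_zero {n : ℕ} (hn : n ≠ 0) : (1 - t ^ n : RatFunc ℚ) ≠ 0 := by
  intro h
  have h1 : (t : RatFunc ℚ) ^ n = 1 := (sub_eq_zero.mp h).symm
  have h2 : algebraMap (Polynomial ℚ) (RatFunc ℚ) (Polynomial.X ^ n) =
      algebraMap (Polynomial ℚ) (RatFunc ℚ) 1 := by
    simpa [t, map_pow, RatFunc.algebraMap_X] using h1
  have h3 : (Polynomial.X : Polynomial ℚ) ^ n = 1 := RatFunc.algebraMap_injective ℚ h2
  have := congrArg Polynomial.natDegree h3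
  simp [Polynomial.natDegree_X_pow] at this
  exact hn this

lemma geom_aux (n : ℕ) : (∑ i ∈ Finset.Icc 1 n, t ^ i) * (1 - t) = t - t ^ (n + 1) := by
  induction n with
  | zero => simp
  | succ n ih =>
    rw [Finset.sum_Icc_succ_top (by omega : 1 ≤ n + 1), add_mul, ih]
    ring

noncomputable def hilbNumOdd (m : ℕ) : RatFunc ℚ :=
  1 + ((2 * m - 1 : ℕ) + 4 : RatFunc ℚ) * ∑ i ∈ Finset.Icc 1 (m - 1), t ^ i
    + ((2 * m - 1 : ℕ) + 6 : RatFunc ℚ) * t ^ m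
    + ((2 * m - 1 : ℕ) + 4 : RatFunc ℚ) * ∑ i ∈ Finset.Icc (m + 1) (2 * m - 1), t ^ i
    + t ^ (2 * m - 1 + 1)

/-- For `k = 2m-1`: `H_{ℙ(1,1,k)} + (k+4)·Q` equals the Hilbert series of a complete
intersection of two hypersurfaces of degree `k+1` in `ℙ(1,1,m,m,k)`. -/
theorem hilbert_series_k_plus_four_odd (m : ℕ) (hm : 1 ≤ m) :
    hilbNumOdd m / ((1 - t) ^ 2 * (1 - t ^ (2 * m - 1)))
        - ((2 * m - 1 : ℕ) + 4 : RatFunc ℚ) * t / (1 - t) ^ 3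
      = (1 - t ^ (2 * m - 1 + 1)) ^ 2
          / ((1 - t) ^ 2 * (1 - t ^ m) ^ 2 * (1 - t ^ (2 * m - 1))) := by
  obtain ⟨n, rfl⟩ : ∃ n, m = n + 1 := ⟨m - 1, by omega⟩
  have e1 : 2 * (n + 1) - 1 = 2 * n + 1 := by omega
  have e2 : n + 1 - 1 = n := by omega
  have ht : (1 - t : RatFunc ℚ) ≠ 0 := by
    simpa using one_sub_t_pow_ne_zero (n := 1) one_ne_zero
  have htm : (1 - t ^ (n + 1) : RatFunc ℚ) ≠ 0 := one_sub_t_pow_ne_zero (by omega)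
  have htk : (1 - t ^ (2 * n + 1) : RatFunc ℚ) ≠ 0 := one_sub_t_pow_ne_zero (by omega)
  have hmap : Finset.Icc (n + 1 + 1) (2 * n + 1)
      = Finset.map (addLeftEmbedding (n + 1)) (Finset.Icc 1 n) := by
    rw [Finset.map_add_left_Icc]
    congr 1
    omega
  have hs2p : (∑ i ∈ Finset.Icc (n + 1 + 1) (2 * n + 1), t ^ i)
      = t ^ (n + 1) * ∑ i ∈ Finset.Icc 1 n, t ^ i := by
    rw [hmap, Finset.sum_map, Finset.mul_sum]
    refine Finset.sum_congr rfl fun i _ => ?_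
    simp [addLeftEmbedding, pow_add]
  have hT : (∑ i ∈ Finset.Icc (n + 1 + 1) (2 * n + 1), t ^ i) * (1 - t)
      = t ^ (n + 1) * (t - t ^ (n + 1)) := by
    rw [hs2p, mul_assoc, geom_aux]
  have hA : hilbNumOdd (n + 1) * (1 - t) =
      (1 - t) + ((2 * n + 1 : ℕ) + 4 : RatFunc ℚ) * (t - t ^ (n + 1))
        + ((2 * n + 1 : ℕ) + 6 : RatFunc ℚ) * (t ^ (n + 1) * (1 - t))
        + ((2 * n + 1 : ℕ) + 4 : RatFunc ℚ) * (t ^ (n + 1) * (t - t ^ (n + 1)))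
        + t ^ (2 * n + 1 + 1) * (1 - t) := by
    unfold hilbNumOdd
    rw [e1, e2]
    linear_combination ((2 * n + 1 : ℕ) + 4 : RatFunc ℚ) * geom_aux n
      + ((2 * n + 1 : ℕ) + 4 : RatFunc ℚ) * hT
  have hAq : hilbNumOdd (n + 1) =
      ((1 - t) + ((2 * n + 1 : ℕ) + 4 : RatFunc ℚ) * (t - t ^ (n + 1))
        + ((2 * n + 1 : ℕ) + 6 : RatFunc ℚ) * (t ^ (n + 1) * (1 - t))
        + ((2 * n + 1 : ℕ) + 4 : RatFunc ℚ) * (t ^ (n + 1) * (t - t ^ (n + 1)))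
        + t ^ (2 * n + 1 + 1) * (1 - t)) / (1 - t) := (eq_div_iff ht).mpr hA
  have p1 : (t : RatFunc ℚ) ^ (n + 1) = t ^ n * t := by ring
  have p2 : (t : RatFunc ℚ) ^ (2 * n + 1) = t ^ n * t ^ n * t := by ring
  have p3 : (t : RatFunc ℚ) ^ (2 * n + 1 + 1) = t ^ n * t ^ n * t * t := by ring
  rw [p1] at htm
  rw [p2] at htk
  rw [e1, hAq, p1, p2, p3]
  generalize (t : RatFunc ℚ) ^ n = u at htm htk ⊢
  rw [div_div, div_sub_div _ _ (by exact mul_ne_zero ht (mul_ne_zero (pow_ne_zero 2 ht) htk))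
      (pow_ne_zero 3 ht),
    div_eq_div_iff
      (mul_ne_zero (mul_ne_zero ht (mul_ne_zero (pow_ne_zero 2 ht) htk)) (pow_ne_zero 3 ht))
      (mul_ne_zero (mul_ne_zero (pow_ne_zero 2 ht) (pow_ne_zero 2 htm)) htk)]
  push_cast
  ring
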